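/- Let Γ be a group, ρ : Γ → PSL(2,ℂ) an irreducible homomorphism, and A ∈ PSL(2,ℂ) an element such that A ρ(γ) A⁻¹ = ρ(γ) for all γ ∈ Γ. Then either A is the identity of PSL(2,ℂ), or there exists B ∈ PSL(2,ℂ) such that B A B⁻¹ is the class ±diag(i, −i) and B ρ(Γ) B⁻¹ ⊆ 𝒩. In particular, if ρ is strictly irreducible then A is the identity. -/

import Mathlib

noncomputable section

/-- `SL(2,ℂ)`. -/
abbrev SL2C : Type := Matrix.SpecialLinearGroup (Fin 2) ℂ

/-- `PSL(2,ℂ)`, the quotient of `SL(2,ℂ)` by its center `{±I}`. -/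
abbrev PSL2C : Type := SL2C ⧸ Subgroup.center SL2C

/-- The canonical projection `SL(2,ℂ) → PSL(2,ℂ)`. -/
def projPSL : SL2C →* PSL2C := QuotientGroup.mk' (Subgroup.center SL2C)

/-- A homomorphism into `PSL(2,ℂ)` is reducible if some nonzero `v ∈ ℂ²` is an eigenvector of
every matrix representing an element of the image. -/
def IsReducibleRep {Γ : Type*} [Group Γ] (ρ : Γ →* PSL2C) : Prop :=
  ∃ v : Fin 2 → ℂ, v ≠ 0 ∧ ∀ (γ : Γ) (M : SL2C), projPSL M = ρ γ →
    ∃ c : ℂ, Matrix.mulVec (M : Matrix (Fin 2) (Fin 2) ℂ) v = c • v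

/-- The subgroup `𝒩 ⊆ PSL(2,ℂ)` of classes of matrices that are either diagonal or have both
diagonal entries `0`, as a set. -/
def NNset : Set PSL2C :=
  {x | ∃ M : SL2C, projPSL M = x ∧
    (((M : Matrix (Fin 2) (Fin 2) ℂ) 0 1 = 0 ∧ (M : Matrix (Fin 2) (Fin 2) ℂ) 1 0 = 0) ∨
     ((M : Matrix (Fin 2) (Fin 2) ℂ) 0 0 = 0 ∧ (M : Matrix (Fin 2) (Fin 2) ℂ) 1 1 = 0))}

/-- Strictly irreducible: irreducible and no conjugate has image contained in `𝒩`. -/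
def IsStrictlyIrreducibleRep {Γ : Type*} [Group Γ] (ρ : Γ →* PSL2C) : Prop :=
  ¬ IsReducibleRep ρ ∧ ∀ B : PSL2C, ¬ (∀ γ : Γ, B * ρ γ * B⁻¹ ∈ NNset)

/-- The matrix `diag(i, -i)` as an element of `SL(2,ℂ)`. -/
def DiagI : SL2C :=
  ⟨!![Complex.I, 0; 0, -Complex.I], by norm_num [Matrix.det_fin_two_of, Complex.I_mul_I]⟩

-- ### auxiliary material

lemma center_coe {X : SL2C} (h : X ∈ Subgroup.center SL2C) :
    (X : Matrix (Fin 2) (Fin 2) ℂ) = 1 ∨ (X : Matrix (Fin 2) (Fin 2) ℂ) = -1 := by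
  obtain ⟨r, hr1, hr2⟩ := Matrix.SpecialLinearGroup.mem_center_iff.mp h
  rw [Fintype.card_fin] at hr1
  have h1 : r = 1 ∨ r = -1 := by
    have h2 : (r - 1) * (r + 1) = 0 := by linear_combination hr1
    rcases mul_eq_zero.mp h2 with h | h
    · exact Or.inl (by linear_combination h)
    · exact Or.inr (by linear_combination h)
  rcases h1 with h1 | h1 <;> [left; right] <;> rw [← hr2, h1] <;>
    ext i j <;> fin_cases i <;> fin_cases j <;>
      simp [Matrix.scalar_apply, Matrix.diagonal]

/-- the central element `-1` of `SL(2,ℂ)`. -/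
def Zc : SL2C := ⟨-1, by simp [Matrix.det_neg]⟩

lemma Zc_coe : (Zc : Matrix (Fin 2) (Fin 2) ℂ) = -1 := rfl

lemma Zc_center : Zc ∈ Subgroup.center SL2C := by
  refine Subgroup.mem_center_iff.mpr fun g => Subtype.coe_injective ?_
  simp [Matrix.SpecialLinearGroup.coe_mul, Zc_coe]

lemma Zc_sq : Zc * Zc = 1 := by
  apply Subtype.coe_injective
  simp [Matrix.SpecialLinearGroup.coe_mul, Zc_coe]

lemma lift_rel {M N : SL2C} (h : projPSL M = projPSL N) : N = M ∨ N = Zc * M := by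
  obtain ⟨z, hz, hzM⟩ := (QuotientGroup.mk'_eq_mk' _).mp h
  rcases center_coe hz with h1 | h1
  · left
    have : z = 1 := Subtype.coe_injective (by simp [h1])
    rw [← hzM, this, mul_one]
  · right
    have hzZ : z = Zc := Subtype.coe_injective (by simp [h1, Zc])
    rw [← hzM, hzZ]
    have := (Subgroup.mem_center_iff.mp Zc_center) M
    rw [this]

lemma comm_or_anti {Γ : Type*} [Group Γ] (ρ : Γ →* PSL2C) (M : SL2C)
    (hA : ∀ γ : Γ, projPSL M * ρ γ * (projPSL M)⁻¹ = ρ γ)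
    (γ : Γ) (N : SL2C) (hN : projPSL N = ρ γ) :
    M * N = N * M ∨ M * N = Zc * (N * M) := by
  have h : projPSL (M * N * M⁻¹) = projPSL N := by
    rw [map_mul, map_mul, map_inv, hN, hA γ]
  rcases lift_rel h with h1 | h1
  · left
    conv_rhs => rw [h1]
    group
  · right
    have h2 : N * M = Zc * (M * N) := by
      conv_lhs => rw [h1]
      group
    rw [h2, ← mul_assoc, Zc_sq, one_mul]

lemma kernel2 (p q w0 w1 : ℂ) (h : ¬(p = 0 ∧ q = 0)) (hw : p * w0 + q * w1 = 0) :
    ∃ c : ℂ, w0 = c * q ∧ w1 = c * (-p) := by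
  by_cases hq : q = 0
  · have hp : p ≠ 0 := fun hp => h ⟨hp, hq⟩
    have hw0 : w0 = 0 := by
      have hpw : p * w0 = 0 := by linear_combination hw - w1 * hq
      rcases mul_eq_zero.mp hpw with h | h
      · exact absurd h hp
      · exact h
    refine ⟨-w1 / p, by simp [hq, hw0], by field_simp⟩
  · refine ⟨w0 / q, by field_simp, ?_⟩
    field_simp
    linear_combination hw

-- coe of products
lemma sl_coe_mul (X Y : SL2C) :
    ((X * Y : SL2C) : Matrix (Fin 2) (Fin 2) ℂ) = (X : Matrix (Fin 2) (Fin 2) ℂ) * Y :=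
  rfl

lemma eigvec_ne_zero {x y : ℂ} (h : ¬(x = 0 ∧ y = 0)) : (![y, -x] : Fin 2 → ℂ) ≠ 0 := by
  intro h0
  apply h
  constructor
  · have := congrFun h0 1
    simpa using (neg_eq_zero.mp (by simpa using this))
  · have := congrFun h0 0
    simpa using this

lemma vec_ext_two {v w : Fin 2 → ℂ} (h0 : v 0 = w 0) (h1 : v 1 = w 1) : v = w := by
  funext i
  rcases Fin.exists_fin_two.mp ⟨i, rfl⟩ with h | h <;> rw [h] <;> assumption

lemma mat_ext_two {A B : Matrix (Fin 2) (Fin 2) ℂ} (h00 : A 0 0 = B 0 0) (h01 : A 0 1 = B 0 1)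
    (h10 : A 1 0 = B 1 0) (h11 : A 1 1 = B 1 1) : A = B := by
  simp only [← Matrix.ext_iff, Fin.forall_fin_two]
  exact ⟨⟨h00, h01⟩, ⟨h10, h11⟩⟩

lemma mulVec_two (m : Matrix (Fin 2) (Fin 2) ℂ) (w : Fin 2 → ℂ) (i : Fin 2) :
    m.mulVec w i = m i 0 * w 0 + m i 1 * w 1 := by
  simp [Matrix.mulVec, dotProduct, Fin.sum_univ_two]

lemma reducible_of_commuting {Γ : Type*} [Group Γ] (ρ : Γ →* PSL2C) (M : SL2C)
    (hM : M ∉ Subgroup.center SL2C)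
    (hcomm : ∀ (γ : Γ) (N : SL2C), projPSL N = ρ γ →
      (M : Matrix (Fin 2) (Fin 2) ℂ) * (N : Matrix (Fin 2) (Fin 2) ℂ)
        = (N : Matrix (Fin 2) (Fin 2) ℂ) * (M : Matrix (Fin 2) (Fin 2) ℂ)) :
    IsReducibleRep ρ := by
  set m : Matrix (Fin 2) (Fin 2) ℂ := (M : Matrix (Fin 2) (Fin 2) ℂ) with hm
  have hdet : m 0 0 * m 1 1 - m 0 1 * m 1 0 = 1 := by
    rw [← Matrix.det_fin_two]; exact M.prop
  obtain ⟨lam, hlam⟩ : ∃ lam : ℂ, lam ^ 2 - (m 0 0 + m 1 1) * lam + 1 = 0 := by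
    obtain ⟨s, hs⟩ := IsAlgClosed.exists_pow_nat_eq (k := ℂ)
      ((m 0 0 + m 1 1) ^ 2 - 4) (n := 2) two_pos
    exact ⟨(m 0 0 + m 1 1 + s) / 2, by linear_combination hs / 4⟩
  have hPdet : (m 0 0 - lam) * (m 1 1 - lam) - m 0 1 * m 1 0 = 0 := by
    linear_combination hdet + hlam
  have hnz : ¬(m 0 0 - lam = 0 ∧ m 0 1 = 0 ∧ m 1 0 = 0 ∧ m 1 1 - lam = 0) := by
    rintro ⟨h1, h2, h3, h4⟩
    apply hM
    refine Matrix.SpecialLinearGroup.mem_center_iff.mpr ⟨lam, ?_, ?_⟩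
    · rw [Fintype.card_fin]
      linear_combination hdet - (m 1 1) * h1 - lam * h4 + (m 1 0) * h2
    · ext i j
      fin_cases i <;> fin_cases j <;> simp [Matrix.scalar_apply, ← hm]
      · linear_combination -h1
      · exact h2.symm
      · exact h3.symm
      · linear_combination -h4
  by_cases hrow : m 0 0 - lam = 0 ∧ m 0 1 = 0
  · -- first row of m - lam is zero; use second row
    have hrow2 : ¬(m 1 0 = 0 ∧ m 1 1 - lam = 0) := by tauto
    refine ⟨![m 1 1 - lam, -(m 1 0)], eigvec_ne_zero hrow2, ?_⟩
    intro γ N hN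
    have hcm := hcomm γ N hN
    have hmv : m.mulVec ![m 1 1 - lam, -(m 1 0)] = lam • ![m 1 1 - lam, -(m 1 0)] := by
      refine vec_ext_two ?_ ?_ <;> rw [mulVec_two] <;>
        simp only [Matrix.cons_val_zero, Matrix.cons_val_one, Matrix.head_cons,
          Pi.smul_apply, smul_eq_mul]
      · linear_combination hPdet
      · ring
    have hw : m.mulVec ((N : Matrix (Fin 2) (Fin 2) ℂ).mulVec ![m 1 1 - lam, -(m 1 0)])
        = lam • (N : Matrix (Fin 2) (Fin 2) ℂ).mulVec ![m 1 1 - lam, -(m 1 0)] := by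
      rw [Matrix.mulVec_mulVec, hcm, ← Matrix.mulVec_mulVec, hmv, Matrix.mulVec_smul]
    have h1 := congrFun hw 1
    rw [mulVec_two] at h1
    simp only [Pi.smul_apply, smul_eq_mul] at h1
    obtain ⟨c, hc0, hc1⟩ := kernel2 (m 1 0) (m 1 1 - lam)
      ((N : Matrix (Fin 2) (Fin 2) ℂ).mulVec ![m 1 1 - lam, -(m 1 0)] 0)
      ((N : Matrix (Fin 2) (Fin 2) ℂ).mulVec ![m 1 1 - lam, -(m 1 0)] 1)
      hrow2 (by linear_combination h1)
    refine ⟨c, vec_ext_two ?_ ?_⟩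
    · simpa using hc0
    · simp only [Pi.smul_apply, Matrix.cons_val_one, Matrix.head_cons, smul_eq_mul,
        Matrix.cons_val_zero]
      linear_combination hc1
  · refine ⟨![m 0 1, -(m 0 0 - lam)], eigvec_ne_zero hrow, ?_⟩
    intro γ N hN
    have hcm := hcomm γ N hN
    have hmv : m.mulVec ![m 0 1, -(m 0 0 - lam)] = lam • ![m 0 1, -(m 0 0 - lam)] := by
      refine vec_ext_two ?_ ?_ <;> rw [mulVec_two] <;>
        simp only [Matrix.cons_val_zero, Matrix.cons_val_one, Matrix.head_cons,
          Pi.smul_apply, smul_eq_mul]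
      · ring
      · linear_combination -hPdet
    have hw : m.mulVec ((N : Matrix (Fin 2) (Fin 2) ℂ).mulVec ![m 0 1, -(m 0 0 - lam)])
        = lam • (N : Matrix (Fin 2) (Fin 2) ℂ).mulVec ![m 0 1, -(m 0 0 - lam)] := by
      rw [Matrix.mulVec_mulVec, hcm, ← Matrix.mulVec_mulVec, hmv, Matrix.mulVec_smul]
    have h0 := congrFun hw 0
    rw [mulVec_two] at h0
    simp only [Pi.smul_apply, smul_eq_mul] at h0
    obtain ⟨c, hc0, hc1⟩ := kernel2 (m 0 0 - lam) (m 0 1)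
      ((N : Matrix (Fin 2) (Fin 2) ℂ).mulVec ![m 0 1, -(m 0 0 - lam)] 0)
      ((N : Matrix (Fin 2) (Fin 2) ℂ).mulVec ![m 0 1, -(m 0 0 - lam)] 1)
      hrow (by linear_combination h0)
    refine ⟨c, vec_ext_two ?_ ?_⟩
    · simpa using hc0
    · simp only [Pi.smul_apply, Matrix.cons_val_one, Matrix.head_cons, smul_eq_mul,
        Matrix.cons_val_zero]
      linear_combination hc1

lemma DiagI_coe : (DiagI : Matrix (Fin 2) (Fin 2) ℂ) = !![Complex.I, 0; 0, -Complex.I] := rfl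

lemma conj_diag (M : SL2C)
    (htr : (M : Matrix (Fin 2) (Fin 2) ℂ) 1 1 = -((M : Matrix (Fin 2) (Fin 2) ℂ) 0 0)) :
    ∃ R : SL2C, M * R = R * DiagI := by
  set m : Matrix (Fin 2) (Fin 2) ℂ := (M : Matrix (Fin 2) (Fin 2) ℂ) with hm
  have hdet : m 0 0 * m 1 1 - m 0 1 * m 1 0 = 1 := by
    rw [← Matrix.det_fin_two]; exact M.prop
  by_cases hc : m 1 0 = 0
  · by_cases hb : m 0 1 = 0
    · -- m is diagonal; m = ± DiagI
      have ha2 : (m 0 0 - Complex.I) * (m 0 0 + Complex.I) = 0 := by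
        have h0 : m 0 0 ^ 2 + 1 = 0 := by
          linear_combination -hdet + m 0 0 * htr - m 0 1 * hc
        linear_combination h0 - Complex.I_sq
      rcases mul_eq_zero.mp ha2 with ha | ha
      · refine ⟨1, ?_⟩
        rw [mul_one, one_mul]
        apply Subtype.coe_injective
        show m = (DiagI : Matrix (Fin 2) (Fin 2) ℂ)
        rw [DiagI_coe]
        apply mat_ext_two <;> simp
        · linear_combination ha
        · exact hb
        · exact hc
        · linear_combination htr - ha
      · refine ⟨⟨!![0, 1; -1, 0], by norm_num [Matrix.det_fin_two_of]⟩, ?_⟩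
        apply Subtype.coe_injective
        show m * !![0, 1; -1, 0] = !![0, 1; -1, 0] * (DiagI : Matrix (Fin 2) (Fin 2) ℂ)
        rw [DiagI_coe]
        apply mat_ext_two <;> simp [Matrix.mul_apply, Fin.sum_univ_two]
        · exact hb
        · linear_combination ha
        · linear_combination htr - ha
        · exact hc
    · -- m 0 1 ≠ 0, m 1 0 = 0
      have h2Ib : (-2 * Complex.I * m 0 1) ≠ 0 := by
        simp [hb, Complex.I_ne_zero]
      obtain ⟨s, hs⟩ := IsAlgClosed.exists_pow_nat_eq (k := ℂ) ((-2 * Complex.I * m 0 1)⁻¹)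
        (n := 2) two_pos
      refine ⟨⟨s • !![m 0 1, m 0 1; Complex.I - m 0 0, -Complex.I - m 0 0], ?_⟩, ?_⟩
      · rw [Matrix.det_smul, Matrix.det_fin_two_of, Fintype.card_fin]
        have h1 : m 0 1 * (-Complex.I - m 0 0) - m 0 1 * (Complex.I - m 0 0)
            = -2 * Complex.I * m 0 1 := by ring
        rw [h1, hs, inv_mul_cancel₀ h2Ib]
      · apply Subtype.coe_injective
        show m * (s • !![m 0 1, m 0 1; Complex.I - m 0 0, -Complex.I - m 0 0])
          = (s • !![m 0 1, m 0 1; Complex.I - m 0 0, -Complex.I - m 0 0])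
              * (DiagI : Matrix (Fin 2) (Fin 2) ℂ)
        rw [Matrix.mul_smul, Matrix.smul_mul, DiagI_coe]
        congr 1
        apply mat_ext_two <;> simp [Matrix.mul_apply, Fin.sum_univ_two]
        · ring
        · ring
        · linear_combination -hdet + Complex.I * htr - Complex.I_sq
        · linear_combination -hdet - Complex.I * htr - Complex.I_sq
  · -- m 1 0 ≠ 0
    have h2Ic : (2 * Complex.I * m 1 0) ≠ 0 := by
      simp [hc, Complex.I_ne_zero]
    obtain ⟨s, hs⟩ := IsAlgClosed.exists_pow_nat_eq (k := ℂ) ((2 * Complex.I * m 1 0)⁻¹)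
      (n := 2) two_pos
    refine ⟨⟨s • !![Complex.I + m 0 0, -Complex.I + m 0 0; m 1 0, m 1 0], ?_⟩, ?_⟩
    · rw [Matrix.det_smul, Matrix.det_fin_two_of, Fintype.card_fin]
      have h1 : (Complex.I + m 0 0) * m 1 0 - (-Complex.I + m 0 0) * m 1 0
          = 2 * Complex.I * m 1 0 := by ring
      rw [h1, hs, inv_mul_cancel₀ h2Ic]
    · apply Subtype.coe_injective
      show m * (s • !![Complex.I + m 0 0, -Complex.I + m 0 0; m 1 0, m 1 0])
        = (s • !![Complex.I + m 0 0, -Complex.I + m 0 0; m 1 0, m 1 0])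
            * (DiagI : Matrix (Fin 2) (Fin 2) ℂ)
      rw [Matrix.mul_smul, Matrix.smul_mul, DiagI_coe]
      congr 1
      apply mat_ext_two <;> simp [Matrix.mul_apply, Fin.sum_univ_two]
      · linear_combination -hdet + m 0 0 * htr - Complex.I_sq
      · linear_combination -hdet + m 0 0 * htr - Complex.I_sq
      · linear_combination m 1 0 * htr
      · linear_combination m 1 0 * htr

lemma mulI_left (X : Matrix (Fin 2) (Fin 2) ℂ) :
    (!![Complex.I, 0; 0, -Complex.I] : Matrix (Fin 2) (Fin 2) ℂ) * X
      = !![Complex.I * X 0 0, Complex.I * X 0 1;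
           -Complex.I * X 1 0, -Complex.I * X 1 1] := by
  apply mat_ext_two <;> simp [Matrix.mul_apply, Fin.sum_univ_two]

lemma mulI_right (X : Matrix (Fin 2) (Fin 2) ℂ) :
    X * (!![Complex.I, 0; 0, -Complex.I] : Matrix (Fin 2) (Fin 2) ℂ)
      = !![Complex.I * X 0 0, -Complex.I * X 0 1;
           Complex.I * X 1 0, -Complex.I * X 1 1] := by
  apply mat_ext_two <;> simp [Matrix.mul_apply, Fin.sum_univ_two] <;> ring

lemma two_I_ne : (2 * Complex.I : ℂ) ≠ 0 := by simp [Complex.I_ne_zero]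

lemma cancel_2I {x : ℂ} (h : 2 * Complex.I * x = 0) : x = 0 := by
  rcases mul_eq_zero.mp h with h | h
  · exact absurd h two_I_ne
  · exact h

lemma core {Γ : Type*} [Group Γ] (ρ : Γ →* PSL2C) (hirr : ¬ IsReducibleRep ρ) (M : SL2C)
    (hM : M ∉ Subgroup.center SL2C)
    (hA : ∀ γ : Γ, projPSL M * ρ γ * (projPSL M)⁻¹ = ρ γ) :
    ∃ R : SL2C, M * R = R * DiagI ∧
      ∀ γ : Γ, projPSL R⁻¹ * ρ γ * (projPSL R⁻¹)⁻¹ ∈ NNset := by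
  have hnotall : ¬ ∀ (γ : Γ) (N : SL2C), projPSL N = ρ γ →
      (M : Matrix (Fin 2) (Fin 2) ℂ) * (N : Matrix (Fin 2) (Fin 2) ℂ)
        = (N : Matrix (Fin 2) (Fin 2) ℂ) * (M : Matrix (Fin 2) (Fin 2) ℂ) :=
    fun h => hirr (reducible_of_commuting ρ M hM h)
  push_neg at hnotall
  obtain ⟨γ₀, N₀, hN₀, hnc⟩ := hnotall
  have hanti : M * N₀ = Zc * (N₀ * M) := by
    rcases comm_or_anti ρ M hA γ₀ N₀ hN₀ with h | h
    · exfalso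
      apply hnc
      have := congrArg (fun X : SL2C => (X : Matrix (Fin 2) (Fin 2) ℂ)) h
      simpa using this
    · exact h
  have htr : (M : Matrix (Fin 2) (Fin 2) ℂ) 1 1 = -((M : Matrix (Fin 2) (Fin 2) ℂ) 0 0) := by
    have h1 : M = Zc * (N₀ * M) * N₀⁻¹ := by rw [← hanti]; group
    have h2 := congrArg (fun X : SL2C => ((X : Matrix (Fin 2) (Fin 2) ℂ)).trace) h1
    replace h2 : ((M : Matrix (Fin 2) (Fin 2) ℂ)).trace
        = ((Zc * (N₀ * M) * N₀⁻¹ : SL2C) : Matrix (Fin 2) (Fin 2) ℂ).trace := h2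
    have h3 : ((Zc * (N₀ * M) * N₀⁻¹ : SL2C) : Matrix (Fin 2) (Fin 2) ℂ)
        = -(((N₀ * M : SL2C) : Matrix (Fin 2) (Fin 2) ℂ)
            * ((N₀⁻¹ : SL2C) : Matrix (Fin 2) (Fin 2) ℂ)) := by
      simp only [Matrix.SpecialLinearGroup.coe_mul, Zc_coe]
      noncomm_ring
    rw [h3, Matrix.trace_neg, Matrix.trace_mul_comm] at h2
    have h4 : ((N₀⁻¹ : SL2C) : Matrix (Fin 2) (Fin 2) ℂ)
        * ((N₀ * M : SL2C) : Matrix (Fin 2) (Fin 2) ℂ)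
        = ((N₀⁻¹ * (N₀ * M) : SL2C) : Matrix (Fin 2) (Fin 2) ℂ) :=
      (Matrix.SpecialLinearGroup.coe_mul N₀⁻¹ (N₀ * M)).symm
    rw [h4] at h2
    have h5 : N₀⁻¹ * (N₀ * M) = M := by group
    rw [h5] at h2
    have h6 : ((M : Matrix (Fin 2) (Fin 2) ℂ)).trace = 0 := by linear_combination h2 / 2
    rw [Matrix.trace_fin_two] at h6
    linear_combination h6
  obtain ⟨R, hR⟩ := conj_diag M htr
  have hDiag : DiagI = R⁻¹ * M * R := by rw [mul_assoc, hR]; group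
  refine ⟨R, hR, ?_⟩
  intro γ
  obtain ⟨N, hN⟩ := QuotientGroup.mk'_surjective (Subgroup.center SL2C) (ρ γ)
  have hN' : projPSL N = ρ γ := hN
  refine ⟨R⁻¹ * N * R, ?_, ?_⟩
  · simp only [map_mul, map_inv, hN', inv_inv]
  · rcases comm_or_anti ρ M hA γ N hN' with h | h
    · left
      have hcm : DiagI * (R⁻¹ * N * R) = (R⁻¹ * N * R) * DiagI := by
        calc DiagI * (R⁻¹ * N * R) = R⁻¹ * (M * N) * R := by rw [hDiag]; group
        _ = R⁻¹ * (N * M) * R := by rw [h]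
        _ = (R⁻¹ * N * R) * DiagI := by rw [hDiag]; group
      have hcm' := congrArg (fun X : SL2C => (X : Matrix (Fin 2) (Fin 2) ℂ)) hcm
      simp only [Matrix.SpecialLinearGroup.coe_mul] at hcm'
      rw [show ((DiagI : SL2C) : Matrix (Fin 2) (Fin 2) ℂ)
        = !![Complex.I, 0; 0, -Complex.I] from rfl] at hcm'
      set X := ((R⁻¹ * N * R : SL2C) : Matrix (Fin 2) (Fin 2) ℂ) with hX
      rw [show ((R⁻¹ : SL2C) : Matrix (Fin 2) (Fin 2) ℂ) * (N : Matrix (Fin 2) (Fin 2) ℂ)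
        * (R : Matrix (Fin 2) (Fin 2) ℂ) = X by
          rw [hX]; simp [Matrix.SpecialLinearGroup.coe_mul]] at hcm'
      rw [mulI_left, mulI_right] at hcm'
      constructor
      · have h01 := congrFun (congrFun hcm' 0) 1
        simp at h01
        exact cancel_2I (by linear_combination h01)
      · have h10 := congrFun (congrFun hcm' 1) 0
        simp at h10
        exact cancel_2I (by linear_combination -h10)
    · right
      have hz := (Subgroup.mem_center_iff.mp Zc_center) (R⁻¹)
      have hcm : DiagI * (R⁻¹ * N * R) = Zc * ((R⁻¹ * N * R) * DiagI) := by
        calc DiagI * (R⁻¹ * N * R) = R⁻¹ * (M * N) * R := by rw [hDiag]; group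
        _ = R⁻¹ * (Zc * (N * M)) * R := by rw [h]
        _ = Zc * (R⁻¹ * (N * M) * R) := by
            rw [show R⁻¹ * (Zc * (N * M)) * R = (R⁻¹ * Zc) * ((N * M) * R) by group, hz]
            group
        _ = Zc * ((R⁻¹ * N * R) * DiagI) := by rw [hDiag]; group
      have hcm' := congrArg (fun X : SL2C => (X : Matrix (Fin 2) (Fin 2) ℂ)) hcm
      simp only [Matrix.SpecialLinearGroup.coe_mul, Zc_coe] at hcm'
      rw [show ((DiagI : SL2C) : Matrix (Fin 2) (Fin 2) ℂ)
        = !![Complex.I, 0; 0, -Complex.I] from rfl] at hcm'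
      set X := ((R⁻¹ * N * R : SL2C) : Matrix (Fin 2) (Fin 2) ℂ) with hX
      rw [show ((R⁻¹ : SL2C) : Matrix (Fin 2) (Fin 2) ℂ) * (N : Matrix (Fin 2) (Fin 2) ℂ)
        * (R : Matrix (Fin 2) (Fin 2) ℂ) = X by
          rw [hX]; simp [Matrix.SpecialLinearGroup.coe_mul]] at hcm'
      rw [mulI_left, mulI_right] at hcm'
      constructor
      · have h00 := congrFun (congrFun hcm' 0) 0
        simp at h00
        exact cancel_2I (by linear_combination h00)
      · have h11 := congrFun (congrFun hcm' 1) 1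
        simp at h11
        exact cancel_2I (by linear_combination -h11)


/-- If `ρ : Γ → PSL(2,ℂ)` is irreducible and `A ∈ PSL(2,ℂ)` commutes with every
element of the image of `ρ`, then either `A = 1`, or some conjugate of `A` is `±diag(i, -i)` with
the corresponding conjugate of `ρ` having image in `𝒩`.  In particular, if `ρ` is strictly
irreducible then `A = 1`. -/
theorem stmt1 {Γ : Type*} [Group Γ] (ρ : Γ →* PSL2C) (hirr : ¬ IsReducibleRep ρ)
    (A : PSL2C) (hA : ∀ γ : Γ, A * ρ γ * A⁻¹ = ρ γ) :
    (A = 1 ∨ ∃ B : PSL2C, B * A * B⁻¹ = projPSL DiagI ∧ ∀ γ : Γ, B * ρ γ * B⁻¹ ∈ NNset) ∧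
    (IsStrictlyIrreducibleRep ρ → A = 1) := by
  by_cases h1 : A = 1
  · exact ⟨Or.inl h1, fun _ => h1⟩
  · obtain ⟨M, hM⟩ := QuotientGroup.mk'_surjective (Subgroup.center SL2C) A
    have hMA : projPSL M = A := hM
    have hMc : M ∉ Subgroup.center SL2C := by
      intro hmem
      exact h1 (by rw [← hMA]; exact (QuotientGroup.eq_one_iff M).mpr hmem)
    have hA' : ∀ γ : Γ, projPSL M * ρ γ * (projPSL M)⁻¹ = ρ γ := by
      simp only [hMA]; exact hA
    obtain ⟨R, hR, hNN⟩ := core ρ hirr M hMc hA'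
    have hRD : R⁻¹ * M * R = DiagI := by rw [mul_assoc, hR]; group
    have hBA : projPSL R⁻¹ * A * (projPSL R⁻¹)⁻¹ = projPSL DiagI := by
      calc projPSL R⁻¹ * A * (projPSL R⁻¹)⁻¹ = projPSL (R⁻¹ * M * R) := by
            rw [← hMA]; simp [map_mul, map_inv, mul_assoc]
      _ = projPSL DiagI := by rw [hRD]
    have h2 : ∃ B : PSL2C, B * A * B⁻¹ = projPSL DiagI ∧ ∀ γ : Γ, B * ρ γ * B⁻¹ ∈ NNset :=
      ⟨projPSL R⁻¹, hBA, hNN⟩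
    refine ⟨Or.inr h2, fun hs => ?_⟩
    obtain ⟨B, _, hB2⟩ := h2
    exact absurd hB2 (hs.2 B)
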